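/- Fix an integer n ≥ 2. Let h ∈ Homeo₊(ℝ) and suppose there exists a compact set K ⊆ ℝ such that h commutes with u ∘ h ∘ u⁻¹ for every u ∈ BS(1,n) with u(K) ∩ K = ∅. Suppose moreover that the support of h is not compact. Then h has no fixed points, i.e. h(x) ≠ x for every x ∈ ℝ. -/

import Mathlib

open Set Topology

/-- The group of self-homeomorphisms of `X`, with `(f * g) x = f (g x)`. -/
instance {X : Type*} [TopologicalSpace X] : Group (X ≃ₜ X) where
  mul f g := g.trans f
  one := Homeomorph.refl X
  inv := Homeomorph.symm
  mul_assoc _ _ _ := Homeomorph.ext fun _ => rfl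
  one_mul _ := Homeomorph.ext fun _ => rfl
  mul_one _ := Homeomorph.ext fun _ => rfl
  inv_mul_cancel f := Homeomorph.ext fun x => f.symm_apply_apply x

/-- The support of a homeomorphism: the closure of the set of non-fixed points. -/
def Supp (f : ℝ ≃ₜ ℝ) : Set ℝ := closure {x | f x ≠ x}

/-- The homeomorphism `x ↦ n·x` of `ℝ`. -/
noncomputable def dilation (n : ℕ) (hn : 2 ≤ n) : ℝ ≃ₜ ℝ :=
  Homeomorph.mulLeft₀ (n : ℝ) (by positivity)

/-- The homeomorphism `x ↦ x + t` of `ℝ`. -/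
noncomputable def translation (t : ℝ) : ℝ ≃ₜ ℝ := Homeomorph.addRight t

/-- The standard affine Baumslag–Solitar group `BS(1,n)`, generated by `x ↦ n·x`
and `x ↦ x + 1`, as a subgroup of the homeomorphism group of `ℝ`. -/
noncomputable def BSgroup (n : ℕ) (hn : 2 ≤ n) : Subgroup (ℝ ≃ₜ ℝ) :=
  Subgroup.closure {dilation n hn, translation 1}

/-!
If `h` fixes `α` and commutes with `g = u h u⁻¹`, then `g` fixes `u α`, and so the fixed-point
set `u (Fix h)` of `g` is `h`-invariant: whenever `u α` is not fixed by `h`, one of `h^{±1} (u α)`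
lies above `u α` and is the image under `u` of a fixed point of `h`. If `u` is increasing and
expanding to the right of `α`, that fixed point lies in `(α, y)` as soon as `u α` and
`h^{±1} (u α)` lie below `y`.

Suppose the non-fixed set of `h` is unbounded above (the other case follows by conjugating with
`x ↦ -x`, which normalises `BS(1,n)`) and `h` has a fixed point; let `K ⊆ [-M, M]`. If the fixed
points of `h` are bounded above, take `α` to be the largest one and `u` a large integer
translation, which moves `K` off itself. Otherwise take a fixed point `c > M`, a non-fixed
`y > c` and the largest fixed point `α ≤ y`; the map `x ↦ n^k x + t` with `k` large and the
`n`-adic `t` chosen so that `u α` is just above `α` moves `K` far to the left of itself. In both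
cases the argument above produces a fixed point in a gap of the fixed-point set.
-/

open Function

section Conjugation

variable {X : Type*} [TopologicalSpace X]

def CommutesWithDisjointConjugates (G : Subgroup (X ≃ₜ X)) (K : Set X) (h : X ≃ₜ X) : Prop :=
  ∀ u ∈ G, u '' K ∩ K = ∅ → Commute h (u * h * u⁻¹)

theorem CommutesWithDisjointConjugates.conj {G : Subgroup (X ≃ₜ X)} {K : Set X}
    {h g : X ≃ₜ X} (hh : CommutesWithDisjointConjugates G K h)
    (hg : ∀ u ∈ G, g⁻¹ * u * g ∈ G) :
    CommutesWithDisjointConjugates G (g '' K) (g * h * g⁻¹) := by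
  intro u hu hdisj
  have hdisj' : (g⁻¹ * u * g) '' K ∩ K = ∅ := by
    rw [eq_empty_iff_forall_notMem] at hdisj ⊢
    rintro _ ⟨⟨x, hx, rfl⟩, hxK⟩
    exact hdisj (u (g x)) ⟨mem_image_of_mem u (mem_image_of_mem g hx), _, hxK, by simp⟩
  simpa [mul_assoc] using (hh _ (hg u hu) hdisj').map (MulAut.conj g).toMonoidHom

theorem isFixedPt_inv_apply_of_commute_conj {f h u : X ≃ₜ X}
    (hf : Commute f (u * h * u⁻¹)) {α : X} (hα : IsFixedPt h α) :
    IsFixedPt h (u⁻¹ (f (u α))) := by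
  have hconj : IsFixedPt (u * h * u⁻¹) (u α) := by simp [IsFixedPt, hα.eq]
  have hsemi : Semiconj f (u * h * u⁻¹) (u * h * u⁻¹) := fun x => congrArg (· x) hf.eq
  exact u.injective (by simpa [IsFixedPt] using hconj.map hsemi)

end Conjugation

theorem exists_isFixedPt_mem_Ioo_of_commute_conj {h u : ℝ ≃ₜ ℝ} (hh : StrictMono h)
    (hu : StrictMono u) (hcomm : Commute h (u * h * u⁻¹)) {α y : ℝ} (hα : IsFixedPt h α)
    (hαu : α < u α) (hexp : ∀ z, α ≤ z → z ≤ u z)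
    (hy : max (u α) (max (h (u α)) (h⁻¹ (u α))) < y) :
    ∃ z ∈ Ioo α y, IsFixedPt h z := by
  rw [max_lt_iff, max_lt_iff] at hy
  obtain ⟨hy, hy₁, hy₂⟩ := hy
  have of_fixed_preimage : ∀ w, u α < w → w < y → IsFixedPt h (u⁻¹ w) →
      ∃ z ∈ Ioo α y, IsFixedPt h z := by
    intro w hw hwy hfix
    have hαz : α < u⁻¹ w := hu.lt_iff_lt.1 (by simpa using hw)
    exact ⟨u⁻¹ w, ⟨hαz, (hexp _ hαz.le).trans_lt (by simpa using hwy)⟩, hfix⟩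
  by_cases hp : IsFixedPt h (u α)
  · exact ⟨u α, ⟨hαu, hy⟩, hp⟩
  rcases lt_or_gt_of_ne hp with hlt | hgt
  · exact of_fixed_preimage _ (hh.lt_iff_lt.1 (by simpa using hlt)) hy₂
      (isFixedPt_inv_apply_of_commute_conj hcomm.inv_left hα)
  · exact of_fixed_preimage _ hgt hy₁ (isFixedPt_inv_apply_of_commute_conj hcomm hα)

theorem exists_intCast_div_pow_mem_Ioo {r a b : ℝ} (hr : 1 < r) (hab : a < b) :
    ∃ (j : ℕ) (m : ℤ), (m : ℝ) / r ^ j ∈ Ioo a b := by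
  obtain ⟨j, hj⟩ := pow_unbounded_of_one_lt (b - a)⁻¹ hr
  have hrj : 0 < r ^ j := by positivity
  have hgap : 1 < r ^ j * b - r ^ j * a := by
    rw [inv_lt_iff_one_lt_mul₀ (sub_pos.2 hab)] at hj
    linarith
  refine ⟨j, ⌊r ^ j * a⌋ + 1, ?_, ?_⟩
  · rw [lt_div_iff₀ hrj]
    push_cast
    linarith [Int.lt_floor_add_one (r ^ j * a)]
  · rw [div_lt_iff₀ hrj]
    push_cast
    linarith [Int.floor_le (r ^ j * a)]

theorem image_inter_self_eq_empty {K : Set ℝ} {M : ℝ} (hKM : ∀ x ∈ K, |x| ≤ M)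
    {u : ℝ → ℝ} (hu : ∀ x ∈ K, M < |u x|) : u '' K ∩ K = ∅ := by
  rw [eq_empty_iff_forall_notMem]
  rintro _ ⟨⟨x, hx, rfl⟩, hux⟩
  exact (hKM _ hux).not_gt (hu x hx)

section BaumslagSolitar

variable (n : ℕ) (hn : 2 ≤ n)

theorem dilation_mem_BSgroup : dilation n hn ∈ BSgroup n hn :=
  Subgroup.subset_closure (mem_insert _ _)

theorem translation_one_mem_BSgroup : translation 1 ∈ BSgroup n hn :=
  Subgroup.subset_closure (mem_insert_of_mem _ rfl)

theorem dilation_pow_apply (k : ℕ) (x : ℝ) : (dilation n hn ^ k) x = n ^ k * x := by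
  induction k generalizing x with
  | zero => simp
  | succ k ih =>
    rw [pow_succ, Homeomorph.mul_apply, ih, pow_succ, mul_assoc]
    rfl

theorem translation_one_zpow (m : ℤ) : translation 1 ^ m = translation m := by
  induction m using Int.induction_on with
  | zero => ext x; simp [translation]
  | succ k ih =>
    ext x
    rw [zpow_add_one, Homeomorph.mul_apply, ih]
    simp only [translation, Homeomorph.coe_addRight]
    push_cast
    ring
  | pred k ih =>
    ext x
    rw [zpow_sub_one, Homeomorph.mul_apply, ih]
    simp only [translation, Homeomorph.inv_apply, Homeomorph.addRight_symm,
      Homeomorph.coe_addRight]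
    push_cast
    ring

theorem translation_intCast_mem_BSgroup (m : ℤ) : translation m ∈ BSgroup n hn :=
  translation_one_zpow m ▸ zpow_mem (translation_one_mem_BSgroup n hn) m

theorem translation_intCast_div_pow_mem_BSgroup (m : ℤ) (j : ℕ) :
    translation (m / n ^ j) ∈ BSgroup n hn := by
  have hconj : dilation n hn ^ j * translation (m / n ^ j) =
      translation m * dilation n hn ^ j := by
    ext x
    simp only [translation, Homeomorph.mul_apply, Homeomorph.coe_addRight, dilation_pow_apply]
    field_simp
  have ha := dilation_mem_BSgroup n hn
  rw [eq_inv_mul_of_mul_eq hconj]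
  exact mul_mem (inv_mem (pow_mem ha j))
    (mul_mem (translation_intCast_mem_BSgroup n hn m) (pow_mem ha j))

theorem exists_affine_mem_BSgroup_apply_mem_Ioo (k : ℕ) (α : ℝ) {a b : ℝ} (hab : a < b) :
    ∃ u ∈ BSgroup n hn, ∃ t : ℝ, (∀ x, u x = n ^ k * x + t) ∧ u α ∈ Ioo a b := by
  obtain ⟨j, m, hm⟩ := exists_intCast_div_pow_mem_Ioo (Nat.one_lt_cast.2 hn)
    (sub_lt_sub_right hab (n ^ k * α))
  set u := translation (m / n ^ j) * dilation n hn ^ k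
  have hu_apply (x : ℝ) : u x = n ^ k * x + m / n ^ j := by
    simp [u, dilation_pow_apply, translation]
  refine ⟨u, mul_mem (translation_intCast_div_pow_mem_BSgroup n hn m j)
    (pow_mem (dilation_mem_BSgroup n hn) k), m / n ^ j, hu_apply, ?_⟩
  rw [hu_apply]
  constructor <;> linarith [hm.1, hm.2]

theorem conj_neg_mem_BSgroup {u : ℝ ≃ₜ ℝ} (hu : u ∈ BSgroup n hn) :
    (Homeomorph.neg ℝ)⁻¹ * u * Homeomorph.neg ℝ ∈ BSgroup n hn := by
  suffices BSgroup n hn ≤ (BSgroup n hn).comap (MulAut.conj (Homeomorph.neg ℝ)⁻¹).toMonoidHom by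
    simpa using this hu
  refine (Subgroup.closure_le _).2 ?_
  rintro _ (rfl | rfl) <;>
    simp only [SetLike.mem_coe, Subgroup.mem_comap, MulEquiv.coe_toMonoidHom, MulAut.conj_apply,
      inv_inv]
  · convert dilation_mem_BSgroup n hn using 1
    ext x
    simp [dilation]
  · convert inv_mem (translation_one_mem_BSgroup n hn) using 1
    ext x
    simp [translation, Homeomorph.addRight_symm, add_comm]

end BaumslagSolitar

section FixedPoints

variable {n : ℕ} {hn : 2 ≤ n} {h : ℝ ≃ₜ ℝ} {K : Set ℝ} {M : ℝ}

theorem not_bddAbove_fixedPoints (hh : StrictMono h) (hKM : ∀ x ∈ K, |x| ≤ M)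
    (hKh : CommutesWithDisjointConjugates (BSgroup n hn) K h) (hne : (fixedPoints h).Nonempty) :
    ¬ BddAbove (fixedPoints h) := by
  intro hbdd
  set α := sSup (fixedPoints h)
  have hα : IsFixedPt h α := (isClosed_fixedPoints h.continuous).csSup_mem hne hbdd
  obtain ⟨m, hm⟩ := exists_int_gt (2 * |M|)
  have hm₀ : (0 : ℝ) < m := (by positivity : (0 : ℝ) ≤ 2 * |M|).trans_lt hm
  have hdisj : translation m '' K ∩ K = ∅ := by
    refine image_inter_self_eq_empty hKM fun x hx => lt_abs.2 (Or.inl ?_)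
    show M < x + m
    linarith [neg_le_of_abs_le (hKM x hx), le_abs_self M]
  obtain ⟨z, hz, hzfix⟩ := exists_isFixedPt_mem_Ioo_of_commute_conj hh
    (fun a b hab => by simpa [translation] using hab)
    (hKh _ (translation_intCast_mem_BSgroup n hn m) hdisj) hα
    (lt_add_of_pos_right α hm₀) (fun z _ => le_add_of_nonneg_right hm₀.le) (lt_add_one _)
  exact hz.1.not_ge (le_csSup hbdd hzfix)

theorem bddAbove_setOf_not_isFixedPt (hh : StrictMono h) (hKM : ∀ x ∈ K, |x| ≤ M)
    (hKh : CommutesWithDisjointConjugates (BSgroup n hn) K h) {c : ℝ} (hc : IsFixedPt h c)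
    (hMc : M < c) : BddAbove {x | ¬ IsFixedPt h x} := by
  by_contra habove
  obtain ⟨y, hy, hcy⟩ := not_bddAbove_iff.1 habove c
  set F := fixedPoints h ∩ Iic y
  have hFbdd : BddAbove F := ⟨y, fun _ hz => hz.2⟩
  set α := sSup F
  have hαF : α ∈ F :=
    ((isClosed_fixedPoints h.continuous).inter isClosed_Iic).csSup_mem ⟨c, hc, hcy.le⟩ hFbdd
  have hMα : M < α := hMc.trans_le (le_csSup hFbdd ⟨hc, hcy.le⟩)
  have hαy : α < y := hαF.2.lt_of_ne fun hαy => hy (hαy ▸ hαF.1)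
  have hnear : ∀ᶠ p in 𝓝 α, max p (max (h p) (h⁻¹ p)) < y := by
    have hα' : max α (max (h α) (h⁻¹ α)) < y := by
      simpa [hαF.1.eq, h.symm_apply_eq.2 hαF.1.eq.symm] using hαy
    exact (continuous_id.max (h.continuous.max h.symm.continuous)).continuousAt.eventually_lt
      continuousAt_const hα'
  obtain ⟨β, hαβ, hβ⟩ := mem_nhdsGT_iff_exists_Ioo_subset.1 (nhdsWithin_le_nhds hnear)
  obtain ⟨k, hk⟩ := pow_unbounded_of_one_lt ((β + M) / (α - M)) (Nat.one_lt_cast.2 hn)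
  rw [div_lt_iff₀ (sub_pos.2 hMα)] at hk
  obtain ⟨u, hu, t, hut, huα⟩ := exists_affine_mem_BSgroup_apply_mem_Ioo n hn k α hαβ
  have hnk : (1 : ℝ) ≤ n ^ k := one_le_pow₀ (Nat.one_lt_cast.2 hn).le
  have hdisj : u '' K ∩ K = ∅ := by
    refine image_inter_self_eq_empty hKM fun x hx => lt_abs.2 (Or.inr ?_)
    have hxM : (n : ℝ) ^ k * x ≤ n ^ k * M :=
      mul_le_mul_of_nonneg_left (le_of_abs_le (hKM x hx)) (by positivity)
    rw [hut] at huα ⊢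
    linarith [huα.2]
  obtain ⟨z, hz, hzfix⟩ := exists_isFixedPt_mem_Ioo_of_commute_conj hh
    (fun a b hab => by rw [hut, hut]; gcongr)
    (hKh u hu hdisj) hαF.1 huα.1
    (fun z hz => by
      rw [hut] at huα ⊢
      linarith [mul_le_mul_of_nonneg_right hnk (sub_nonneg.2 hz), huα.1])
    (hβ huα)
  exact hz.1.not_ge (le_csSup hFbdd ⟨hzfix, hz.2.le⟩)

theorem not_isFixedPt_of_not_bddAbove (hh : StrictMono h) (hK : IsCompact K)
    (hKh : CommutesWithDisjointConjugates (BSgroup n hn) K h)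
    (habove : ¬ BddAbove {x | ¬ IsFixedPt h x}) (x : ℝ) : ¬ IsFixedPt h x := by
  intro hx
  obtain ⟨M, hKM⟩ := isBounded_iff_forall_norm_le.1 hK.isBounded
  simp only [Real.norm_eq_abs] at hKM
  obtain ⟨c, hc, hMc⟩ := not_bddAbove_iff.1 (not_bddAbove_fixedPoints hh hKM hKh ⟨x, hx⟩) M
  exact habove (bddAbove_setOf_not_isFixedPt hh hKM hKh hc hMc)

theorem not_isFixedPt_of_not_bddBelow (hh : StrictMono h) (hK : IsCompact K)
    (hKh : CommutesWithDisjointConjugates (BSgroup n hn) K h)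
    (hbelow : ¬ BddBelow {x | ¬ IsFixedPt h x}) (x : ℝ) : ¬ IsFixedPt h x := by
  set ν := Homeomorph.neg ℝ
  have hν_apply (x : ℝ) : (ν * h * ν⁻¹) x = -h (-x) := rfl
  have hnonfixed : {x | ¬ IsFixedPt (ν * h * ν⁻¹) x} = -{x | ¬ IsFixedPt h x} := by
    ext x
    simp [IsFixedPt, hν_apply, neg_eq_iff_eq_neg]
  have hmono : StrictMono (ν * h * ν⁻¹) := fun a b hab => by
    simpa [hν_apply] using hh (neg_lt_neg hab)
  have hreflect := not_isFixedPt_of_not_bddAbove hmono (hK.image ν.continuous)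
    (hKh.conj fun u => conj_neg_mem_BSgroup n hn)
    (by rwa [hnonfixed, bddAbove_neg]) (-x)
  simpa [IsFixedPt, hν_apply] using hreflect

end FixedPoints

theorem no_fixed_points_of_noncompact_support
    (n : ℕ) (hn : 2 ≤ n) (h : ℝ ≃ₜ ℝ) (hhmono : StrictMono h)
    (hK : ∃ K : Set ℝ, IsCompact K ∧
      ∀ u ∈ BSgroup n hn, (u '' K) ∩ K = ∅ → Commute h (u * h * u⁻¹))
    (hsupp : ¬ IsCompact (Supp h)) :
    ∀ x : ℝ, h x ≠ x := by
  obtain ⟨K, hKc, hKh⟩ := hK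
  have hunbdd : ¬ (BddBelow {x | ¬ IsFixedPt h x} ∧ BddAbove {x | ¬ IsFixedPt h x}) :=
    fun hbdd => hsupp (isBounded_iff_bddBelow_bddAbove.2 hbdd).isCompact_closure
  rcases not_and_or.1 hunbdd with hbelow | habove
  · exact not_isFixedPt_of_not_bddBelow hhmono hKc hKh hbelow
  · exact not_isFixedPt_of_not_bddAbove hhmono hKc hKh habove
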